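/- For x > 1, the functions g(x) = (1/2){ln((x−1)/(e·ln x)) + (ln x)/(x−1)} and h(x) = ln((x+1)/(2√x)) satisfy g(x) ≤ h(x) ≤ 2g(x); equivalently, the ratio CI₂/CI₁ of the full-observation to the 1-dimensional optimal-projection Chernoff information for two Gaussian trees differing by a single edge-grafting operation lies in [1, 2]. -/

import Mathlib

/-- The scalar Gaussian Chernoff information (1-dim optimal projection). -/
noncomputable def gFun (x : ℝ) : ℝ :=
  (1/2) * (Real.log ((x - 1) / (Real.exp 1 * Real.log x)) + Real.log x / (x - 1))

/-- The full-observation Chernoff information. -/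
noncomputable def hFun (x : ℝ) : ℝ := Real.log ((x + 1) / (2 * Real.sqrt x))

/-!
Substitute `x = exp (2 * t)` with `t > 0`. Then `h = log (cosh t)` and
`2 g = h + φ (t coth t)`, where `φ w = w - 1 - log w ≥ 0`; this gives `h ≤ 2 g`.
Everything else follows from `tanh t ≤ t`: it gives `1 ≤ t coth t ≤ 1 + t`, so by
monotonicity of `φ` on `[1, ∞)` we get `φ (t coth t) ≤ t - log (1 + t)`, and it is also
equivalent to `t - log (1 + t) ≤ log (cosh t)`. Hence `2 g ≤ 2 h`.
-/

open Real

lemma sinh_le_mul_cosh {t : ℝ} (ht : 0 ≤ t) : sinh t ≤ t * cosh t := by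
  have hderiv (s : ℝ) : HasDerivAt (fun s ↦ s * cosh s - sinh s) (s * sinh s) s :=
    (((hasDerivAt_id' s).fun_mul (hasDerivAt_cosh s)).fun_sub (hasDerivAt_sinh s)).congr_deriv
      (by ring)
  have hmono : MonotoneOn (fun s ↦ s * cosh s - sinh s) (Set.Ici 0) := by
    refine monotoneOn_of_deriv_nonneg (convex_Ici 0) (by fun_prop)
      (fun s _ ↦ (hderiv s).differentiableAt.differentiableWithinAt) fun s hs ↦ ?_
    rw [interior_Ici, Set.mem_Ioi] at hs
    rw [(hderiv s).deriv]
    exact mul_nonneg hs.le (sinh_nonneg_iff.mpr hs.le)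
  simpa using hmono Set.self_mem_Ici ht ht

lemma sub_one_sub_log_le_of_le {a b : ℝ} (ha : 1 ≤ a) (hab : a ≤ b) :
    a - 1 - log a ≤ b - 1 - log b := by
  have ha₀ : 0 < a := by linarith
  have hlog : log b - log a ≤ b / a - 1 := by
    rw [← log_div (by linarith) ha₀.ne']
    have : 0 < b / a := div_pos (by linarith) ha₀
    exact log_le_sub_one_of_pos this
  have hdiv : b / a - 1 ≤ b - a := by
    rw [div_sub_one ha₀.ne', div_le_iff₀ ha₀]
    nlinarith
  linarith

lemma one_le_mul_cosh_div_sinh {t : ℝ} (ht : 0 < t) : 1 ≤ t * cosh t / sinh t := by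
  rw [one_le_div (sinh_pos_iff.mpr ht)]
  exact sinh_le_mul_cosh ht.le

lemma mul_cosh_div_sinh_le_one_add {t : ℝ} (ht : 0 < t) : t * cosh t / sinh t ≤ 1 + t := by
  rw [div_le_iff₀ (sinh_pos_iff.mpr ht), sinh_eq, cosh_eq]
  have hexp : exp t * exp (-t) = 1 := by rw [← exp_add, add_neg_cancel, exp_zero]
  have h2t : 2 * t + 1 ≤ exp t * exp t := by
    rw [← exp_add, ← two_mul]
    exact add_one_le_exp (2 * t)
  nlinarith [exp_pos t, exp_pos (-t)]

lemma sub_log_one_add_le_log_cosh {t : ℝ} (ht : 0 ≤ t) : t - log (1 + t) ≤ log (cosh t) := by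
  have h : exp t ≤ (1 + t) * cosh t := by
    rw [← cosh_add_sinh]
    linarith [sinh_le_mul_cosh ht]
  have := log_le_log (exp_pos t) h
  rw [log_exp, log_mul (by linarith) (cosh_pos t).ne'] at this
  linarith

lemma hFun_exp_two_mul (t : ℝ) : hFun (exp (2 * t)) = log (cosh t) := by
  rw [hFun, ← exp_half, mul_div_cancel_left₀ t two_ne_zero, cosh_eq]
  congr 1
  rw [two_mul, exp_add, exp_neg]
  field_simp

lemma two_mul_gFun_exp_two_mul {t : ℝ} (ht : 0 < t) :
    2 * gFun (exp (2 * t)) =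
      log (cosh t) + (t * cosh t / sinh t - 1 - log (t * cosh t / sinh t)) := by
  have hs : 0 < sinh t := sinh_pos_iff.mpr ht
  have hsub : exp (2 * t) - 1 = 2 * exp t * sinh t := by
    rw [sinh_eq, two_mul, exp_add, exp_neg]
    field_simp
  have hdiv : 2 * t / (2 * exp t * sinh t) = t * cosh t / sinh t - t := by
    rw [← sub_add_cancel (cosh t) (sinh t), cosh_sub_sinh, exp_neg]
    field_simp
    ring
  rw [gFun, log_exp, hsub, hdiv]
  rw [log_div (by positivity) (by positivity), log_mul (by positivity) hs.ne',
    log_mul (by positivity) (exp_pos t).ne', log_mul (exp_pos 1).ne' (by positivity),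
    log_mul two_ne_zero ht.ne', log_div (by positivity) hs.ne', log_mul ht.ne' (cosh_pos t).ne',
    log_exp, log_exp]
  ring

/-- `g(x) ≤ h(x) ≤ 2g(x)` for `x > 1`: the ratio `CI₂/CI₁` of full-observation
to 1-dim optimal-projection Chernoff information lies in `[1,2]`. -/
theorem stmt_17 (x : ℝ) (hx : 1 < x) :
    gFun x ≤ hFun x ∧ hFun x ≤ 2 * gFun x := by
  obtain ⟨t, ht, rfl⟩ : ∃ t, 0 < t ∧ x = exp (2 * t) :=
    ⟨log x / 2, by linarith [log_pos hx],
      by rw [mul_div_cancel₀ _ two_ne_zero, exp_log (by linarith)]⟩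
  have hg := two_mul_gFun_exp_two_mul ht
  rw [hFun_exp_two_mul]
  set w := t * cosh t / sinh t
  have hw : 1 ≤ w := one_le_mul_cosh_div_sinh ht
  constructor
  · have : w - 1 - log w ≤ log (cosh t) :=
      calc w - 1 - log w ≤ (1 + t) - 1 - log (1 + t) :=
            sub_one_sub_log_le_of_le hw (mul_cosh_div_sinh_le_one_add ht)
        _ = t - log (1 + t) := by ring
        _ ≤ log (cosh t) := sub_log_one_add_le_log_cosh ht.le
    linarith
  · linarith [log_le_sub_one_of_pos (zero_lt_one.trans_le hw)]
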